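/- Let D be a trace-class operator on H and suppose E := T₊₊(D + D*) + ½ T₀(D + D*) is trace class (where the truncations are applied entrywise to the matrix of D + D* in the basis (eₙ)). Then for every bounded skew-hermitian operator C on H one has Im Tr(C D) = Im Tr(C E). -/

import Mathlib

/- Setting: `H` is a separable complex Hilbert space with a fixed orthonormal
(Hilbert) basis `e` indexed by `ℤ`. -/

set_option synthInstance.maxHeartbeats 1000000
set_option maxHeartbeats 2000000

noncomputable section
open ContinuousLinearMap

namespace PL

variable {H : Type*} [NormedAddCommGroup H] [InnerProductSpace ℂ H] [CompleteSpace H]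

/-- `A` is a bounded skew-hermitian operator: `A* = -A`. -/
def SkewHerm (A : H →L[ℂ] H) : Prop := star A = -A

/-- `A` is Hilbert–Schmidt: `∑ₙ ‖A eₙ‖² < ∞` (computed in the orthonormal basis `e`;
this is equivalent to the basis-free notion). -/
def IsHS (e : HilbertBasis ℤ ℂ H) (A : H →L[ℂ] H) : Prop :=
  Summable (fun n : ℤ => ‖A (e n)‖ ^ 2)

/-- The Hilbert–Schmidt norm `‖A‖₂`. -/
def hsNorm (e : HilbertBasis ℤ ℂ H) (A : H →L[ℂ] H) : ℝ :=
  Real.sqrt (∑' n : ℤ, ‖A (e n)‖ ^ 2)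

/-- The absolute value `|A| = √(A* A)` of a bounded operator, via the continuous
functional calculus. -/
def absCLM (A : H →L[ℂ] H) : H →L[ℂ] H := CFC.sqrt (star A * A)

/-- `A` is trace class: `Tr |A| = ∑ₙ ⟨eₙ, |A| eₙ⟩ < ∞`. -/
def IsTC (e : HilbertBasis ℤ ℂ H) (A : H →L[ℂ] H) : Prop :=
  Summable (fun n : ℤ => (inner ℂ (e n) (absCLM A (e n)) : ℂ).re)

/-- The trace norm `‖A‖₁ = Tr |A|`. -/
def traceNorm (e : HilbertBasis ℤ ℂ H) (A : H →L[ℂ] H) : ℝ :=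
  ∑' n : ℤ, (inner ℂ (e n) (absCLM A (e n)) : ℂ).re

/-- The trace of a (trace-class) operator: `Tr A = ∑ₙ ⟨eₙ, A eₙ⟩`. -/
def traceOp (e : HilbertBasis ℤ ℂ H) (A : H →L[ℂ] H) : ℂ :=
  ∑' n : ℤ, (inner ℂ (e n) (A (e n)) : ℂ)

/-- `A` is upper triangular: `⟨eₘ, A eₙ⟩ = 0` whenever `m < n`. -/
def UpperTri (e : HilbertBasis ℤ ℂ H) (A : H →L[ℂ] H) : Prop :=
  ∀ m n : ℤ, m < n → (inner ℂ (e m) (A (e n)) : ℂ) = 0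

/-- All diagonal entries `⟨eₙ, A eₙ⟩` of `A` are real. -/
def RealDiag (e : HilbertBasis ℤ ℂ H) (A : H →L[ℂ] H) : Prop :=
  ∀ n : ℤ, (inner ℂ (e n) (A (e n)) : ℂ).im = 0

/-- Membership in `b₁⁺(H)`: trace-class, upper triangular, real diagonal. -/
def InB1 (e : HilbertBasis ℤ ℂ H) (A : H →L[ℂ] H) : Prop :=
  IsTC e A ∧ UpperTri e A ∧ RealDiag e A

/-- Membership in `u₁(H)`: trace-class and skew-hermitian. -/
def InU1 (e : HilbertBasis ℤ ℂ H) (A : H →L[ℂ] H) : Prop :=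
  IsTC e A ∧ SkewHerm A

/-- Membership in `b₂⁺(H)`: Hilbert–Schmidt, upper triangular, real diagonal. -/
def InB2 (e : HilbertBasis ℤ ℂ H) (A : H →L[ℂ] H) : Prop :=
  IsHS e A ∧ UpperTri e A ∧ RealDiag e A

/-- Membership in `u₂(H)`: Hilbert–Schmidt and skew-hermitian. -/
def InU2 (e : HilbertBasis ℤ ℂ H) (A : H →L[ℂ] H) : Prop :=
  IsHS e A ∧ SkewHerm A

/-! The entrywise description of `E` says exactly that `E + E* = D + D*`. For a skew-hermitian `C`
and a trace-class `X`, cyclicity of the trace gives `conj Tr(C X) = Tr(X* C*) = -Tr(C X*)`, so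
`Tr(C (X + X*)) = 2 i Im Tr(C X)`: the imaginary part of `Tr(C X)` only depends on `X + X*`.
Cyclicity holds because a trace-class `X` is a product of two Hilbert–Schmidt operators,
`X = (W |X|^{1/2}) |X|^{1/2}`, where `W |X| = X` comes from extending `|X| x ↦ X x`, which is
isometric since `‖|X| x‖ = ‖X x‖`, from the range of `|X|` to its closure. -/

open ComplexConjugate

section HilbertBasis

variable {𝕜 E ι : Type*} [RCLike 𝕜] [NormedAddCommGroup E] [InnerProductSpace 𝕜 E]
  (b : HilbertBasis ι 𝕜 E)

theorem hasSum_norm_inner_sq (x : E) :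
    HasSum (fun i => ‖(inner 𝕜 (b i) x : 𝕜)‖ ^ 2) (‖x‖ ^ 2) := by
  have h := lp.hasSum_norm (p := 2) (by norm_num) (b.repr x)
  simp only [HilbertBasis.repr_apply_apply, LinearIsometryEquiv.norm_map] at h
  exact_mod_cast h

theorem eq_of_inner_basis_eq {x y : E} (h : ∀ i, (inner 𝕜 (b i) x : 𝕜) = inner 𝕜 (b i) y) :
    x = y :=
  b.repr.injective (lp.ext (funext fun i => by simp only [HilbertBasis.repr_apply_apply, h]))

theorem clm_ext_of_inner_basis {T₁ T₂ : E →L[𝕜] E}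
    (h : ∀ i j, (inner 𝕜 (b i) (T₁ (b j)) : 𝕜) = inner 𝕜 (b i) (T₂ (b j))) : T₁ = T₂ := by
  refine ContinuousLinearMap.ext_on (s := Set.range b) ?_ ?_
  · rw [dense_iff_closure_eq, ← Submodule.topologicalClosure_coe, b.dense_span]; rfl
  · rintro _ ⟨j, rfl⟩
    exact eq_of_inner_basis_eq b (fun i => h i j)

theorem hasSum_inner_mul_inner_apply (P : E →L[𝕜] E) (x z : E) :
    HasSum (fun i => (inner 𝕜 x (P (b i)) : 𝕜) * inner 𝕜 (b i) z) (inner 𝕜 x (P z)) := by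
  have h := (b.hasSum_repr z).mapL ((innerSL 𝕜 x).comp P)
  simp only [comp_apply, map_smul, innerSL_apply_apply, HilbertBasis.repr_apply_apply,
    smul_eq_mul] at h
  simpa only [mul_comm] using h

theorem inner_star_apply [CompleteSpace E] (A : E →L[𝕜] E) (x y : E) :
    (inner 𝕜 x (star A y) : 𝕜) = conj (inner 𝕜 y (A x)) := by
  rw [star_eq_adjoint, adjoint_inner_right, inner_conj_symm]

end HilbertBasis

section HilbertSchmidt

variable {E : Type*} [NormedAddCommGroup E] [InnerProductSpace ℂ E] {e : HilbertBasis ℤ ℂ E}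

theorem IsHS.summable_norm_inner_sq_swap {A : E →L[ℂ] E} (hA : IsHS e A) :
    Summable (fun p : ℤ × ℤ => ‖(inner ℂ (e p.2) (A (e p.1)) : ℂ)‖ ^ 2) := by
  rw [summable_prod_of_nonneg (fun _ => by positivity)]
  exact ⟨fun n => (hasSum_norm_inner_sq e (A (e n))).summable,
    hA.congr fun n => (hasSum_norm_inner_sq e (A (e n))).tsum_eq.symm⟩

theorem IsHS.summable_norm_inner_sq {A : E →L[ℂ] E} (hA : IsHS e A) :
    Summable (fun p : ℤ × ℤ => ‖(inner ℂ (e p.1) (A (e p.2)) : ℂ)‖ ^ 2) :=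
  (Equiv.prodComm ℤ ℤ).summable_iff.mp hA.summable_norm_inner_sq_swap

theorem isHS_star [CompleteSpace E] {A : E →L[ℂ] E} (hA : IsHS e A) : IsHS e (star A) := by
  refine ((summable_prod_of_nonneg (fun _ => by positivity)).mp
    hA.summable_norm_inner_sq).2.congr fun m => ?_
  refine HasSum.tsum_eq ((hasSum_norm_inner_sq e (star A (e m))).congr_fun fun n => ?_)
  rw [inner_star_apply, RCLike.norm_conj]

theorem IsHS.mul_left {A : E →L[ℂ] E} (hA : IsHS e A) (C : E →L[ℂ] E) : IsHS e (C * A) := by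
  refine .of_nonneg_of_le (fun _ => by positivity) (fun n => ?_)
    (Summable.mul_left (‖C‖ ^ 2) hA)
  rw [← mul_pow]
  exact pow_le_pow_left₀ (norm_nonneg _) (C.le_opNorm _) 2

theorem IsHS.mul_right [CompleteSpace E] {A : E →L[ℂ] E} (hA : IsHS e A) (C : E →L[ℂ] E) :
    IsHS e (A * C) := by
  simpa only [star_mul, star_star] using isHS_star ((isHS_star hA).mul_left (star C))

theorem IsHS.summable_inner_mul_inner {P Q : E →L[ℂ] E} (hP : IsHS e P) (hQ : IsHS e Q) :
    Summable (fun p : ℤ × ℤ =>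
      (inner ℂ (e p.1) (P (e p.2)) : ℂ) * inner ℂ (e p.2) (Q (e p.1))) := by
  refine .of_norm <| .of_nonneg_of_le (fun _ => norm_nonneg _) (fun p => ?_)
    ((hP.summable_norm_inner_sq.add hQ.summable_norm_inner_sq_swap).mul_left (1 / 2))
  rw [norm_mul]
  nlinarith [sq_nonneg (‖(inner ℂ (e p.1) (P (e p.2)) : ℂ)‖ - ‖(inner ℂ (e p.2) (Q (e p.1)) : ℂ)‖)]

theorem IsHS.hasSum_traceOp_mul {P Q : E →L[ℂ] E} (hP : IsHS e P) (hQ : IsHS e Q) :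
    HasSum (fun n : ℤ => (inner ℂ (e n) ((P * Q) (e n)) : ℂ))
      (∑' p : ℤ × ℤ, (inner ℂ (e p.1) (P (e p.2)) : ℂ) * inner ℂ (e p.2) (Q (e p.1))) :=
  (hP.summable_inner_mul_inner hQ).hasSum.prod_fiberwise
    fun n => hasSum_inner_mul_inner_apply e P (e n) (Q (e n))

theorem IsHS.traceOp_mul_comm {P Q : E →L[ℂ] E} (hP : IsHS e P) (hQ : IsHS e Q) :
    traceOp e (P * Q) = traceOp e (Q * P) := by
  rw [traceOp, traceOp, (hP.hasSum_traceOp_mul hQ).tsum_eq, (hQ.hasSum_traceOp_mul hP).tsum_eq,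
    ← (Equiv.prodComm ℤ ℤ).tsum_eq]
  exact tsum_congr fun p => mul_comm _ _

theorem summable_inner_mul_isHS_mul {P Q : E →L[ℂ] E} (hP : IsHS e P) (hQ : IsHS e Q)
    (C : E →L[ℂ] E) : Summable (fun n : ℤ => (inner ℂ (e n) ((C * (P * Q)) (e n)) : ℂ)) := by
  rw [← mul_assoc]
  exact ((hP.mul_left C).hasSum_traceOp_mul hQ).summable

theorem traceOp_mul_isHS_mul [CompleteSpace E] {P Q : E →L[ℂ] E} (hP : IsHS e P)
    (hQ : IsHS e Q) (C : E →L[ℂ] E) : traceOp e (P * Q * C) = traceOp e (C * (P * Q)) := by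
  rw [mul_assoc, hP.traceOp_mul_comm (hQ.mul_right C), mul_assoc,
    hQ.traceOp_mul_comm (hP.mul_left C), mul_assoc]

theorem traceOp_neg (e : HilbertBasis ℤ ℂ E) (T : E →L[ℂ] E) :
    traceOp e (-T) = -traceOp e T := by
  simp only [traceOp, neg_apply, inner_neg_right, tsum_neg]

theorem traceOp_star [CompleteSpace E] (e : HilbertBasis ℤ ℂ E) (T : E →L[ℂ] E) :
    traceOp e (star T) = conj (traceOp e T) := by
  simp only [traceOp, inner_star_apply, ← Complex.star_def]
  exact tsum_star.symm

end HilbertSchmidt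

section TraceClass

theorem norm_apply_sq_eq_re_inner (T : H →L[ℂ] H) (x : H) :
    ‖T x‖ ^ 2 = (inner ℂ x ((star T * T) x) : ℂ).re := by
  rw [star_eq_adjoint]; exact apply_norm_sq_eq_inner_adjoint_right T x

theorem absCLM_nonneg (A : H →L[ℂ] H) : 0 ≤ absCLM A := CFC.sqrt_nonneg _

theorem norm_absCLM_apply (A : H →L[ℂ] H) (x : H) : ‖absCLM A x‖ = ‖A x‖ := by
  have hS : star (absCLM A) = absCLM A := IsSelfAdjoint.of_nonneg (absCLM_nonneg A)
  rw [← sq_eq_sq₀ (norm_nonneg _) (norm_nonneg _), norm_apply_sq_eq_re_inner,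
    norm_apply_sq_eq_re_inner, hS, absCLM, CFC.sqrt_mul_sqrt_self _ (star_mul_self_nonneg A)]

theorem exists_mul_absCLM_eq (A : H →L[ℂ] H) : ∃ W : H →L[ℂ] H, W * absCLM A = A := by
  let R := LinearMap.range (absCLM A : H →ₗ[ℂ] H)
  let j : H →ₗ[ℂ] R.topologicalClosure := (absCLM A : H →ₗ[ℂ] H).codRestrict _
    (fun x => R.le_topologicalClosure (LinearMap.mem_range_self _ x))
  have hj : DenseRange j := by
    rw [DenseRange, Subtype.dense_iff, ← Set.range_comp]
    exact subset_rfl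
  have hbound : ∃ C, ∀ x, ‖(A : H →ₗ[ℂ] H) x‖ ≤ C * ‖j x‖ :=
    ⟨1, fun x => by simp [j, norm_absCLM_apply]⟩
  refine ⟨((A : H →ₗ[ℂ] H).extendOfNorm j).comp R.topologicalClosure.orthogonalProjectionOnto, ?_⟩
  ext x
  have hproj : R.topologicalClosure.orthogonalProjectionOnto (absCLM A x) = j x :=
    Submodule.orthogonalProjectionOnto_mem_subspace_eq_self (j x)
  simp [hproj, LinearMap.extendOfNorm_eq hj hbound]

variable {e : HilbertBasis ℤ ℂ H}

theorem IsTC.isHS_sqrt_absCLM {A : H →L[ℂ] H} (hA : IsTC e A) :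
    IsHS e (CFC.sqrt (absCLM A)) := by
  refine hA.congr fun n => ?_
  have hR : star (CFC.sqrt (absCLM A)) = CFC.sqrt (absCLM A) :=
    IsSelfAdjoint.of_nonneg (CFC.sqrt_nonneg _)
  rw [norm_apply_sq_eq_re_inner, hR, CFC.sqrt_mul_sqrt_self (absCLM A) (absCLM_nonneg A)]

theorem IsTC.exists_isHS_mul_eq {A : H →L[ℂ] H} (hA : IsTC e A) :
    ∃ P Q : H →L[ℂ] H, IsHS e P ∧ IsHS e Q ∧ P * Q = A := by
  obtain ⟨W, hW⟩ := exists_mul_absCLM_eq A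
  refine ⟨W * CFC.sqrt (absCLM A), CFC.sqrt (absCLM A), hA.isHS_sqrt_absCLM.mul_left W,
    hA.isHS_sqrt_absCLM, ?_⟩
  rw [mul_assoc, CFC.sqrt_mul_sqrt_self (absCLM A) (absCLM_nonneg A), hW]

theorem IsTC.im_traceOp_mul {X : H →L[ℂ] H} (hX : IsTC e X) {C : H →L[ℂ] H}
    (hC : SkewHerm C) :
    (traceOp e (C * X)).im = (traceOp e (C * (X + star X))).im / 2 := by
  obtain ⟨P, Q, hP, hQ, rfl⟩ := hX.exists_isHS_mul_eq
  have hsplit : traceOp e (C * (P * Q + star (P * Q)))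
      = traceOp e (C * (P * Q)) + traceOp e (C * star (P * Q)) := by
    rw [star_mul, traceOp, traceOp, traceOp,
      ← (summable_inner_mul_isHS_mul hP hQ C).tsum_add
        (summable_inner_mul_isHS_mul (isHS_star hQ) (isHS_star hP) C)]
    simp only [mul_add, add_apply, inner_add_right]
  -- `(C X)* = -X* C`, and `X* C` has the same trace as `C X*`
  have hconj : traceOp e (C * star (P * Q)) = -conj (traceOp e (C * (P * Q))) := by
    rw [← traceOp_star, star_mul C, hC, mul_neg, traceOp_neg, neg_neg, star_mul P,
      traceOp_mul_isHS_mul (isHS_star hQ) (isHS_star hP)]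
  rw [hsplit, hconj, ← sub_eq_add_neg, Complex.sub_conj]
  simp

end TraceClass

theorem add_star_eq_of_triangular_truncation (e : HilbertBasis ℤ ℂ H) {G T : H →L[ℂ] H}
    (hG : IsSelfAdjoint G)
    (hstrict : ∀ m n : ℤ, n < m → (inner ℂ (e m) (T (e n)) : ℂ) = inner ℂ (e m) (G (e n)))
    (hdiag : ∀ n : ℤ, (inner ℂ (e n) (T (e n)) : ℂ) = (1 / 2 : ℂ) * inner ℂ (e n) (G (e n)))
    (hupper : ∀ m n : ℤ, m < n → (inner ℂ (e m) (T (e n)) : ℂ) = 0) :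
    T + star T = G := by
  have hG_conj : ∀ m n : ℤ, conj (inner ℂ (e m) (G (e n)) : ℂ) = inner ℂ (e n) (G (e m)) :=
    fun m n => by rw [← inner_star_apply, hG.star_eq]
  refine clm_ext_of_inner_basis e fun m n => ?_
  rw [add_apply, inner_add_right, inner_star_apply]
  rcases lt_trichotomy m n with h | rfl | h
  · rw [hupper m n h, hstrict n m h, hG_conj, zero_add]
  · rw [hdiag, map_mul, hG_conj, map_div₀, map_one, map_ofNat]
    ring
  · rw [hstrict m n h, hupper n m h, map_zero, add_zero]

/-- if `D` is trace class and `E = T₊₊(D + D*) + ½ T₀(D + D*)` (described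
entrywise in the basis `e`: strictly-upper entries `m > n` agree with those of `D + D*`,
diagonal entries are half those of `D + D*`, entries with `m < n` vanish) is trace
class, then `Im Tr(C D) = Im Tr(C E)` for every bounded skew-hermitian `C`. -/
theorem statement_2 {H : Type*} [NormedAddCommGroup H] [InnerProductSpace ℂ H]
    [CompleteSpace H] (e : HilbertBasis ℤ ℂ H) (D E : H →L[ℂ] H)
    (hD : IsTC e D) (hE : IsTC e E)
    (hstrict : ∀ m n : ℤ, n < m →
      (inner ℂ (e m) (E (e n)) : ℂ) = inner ℂ (e m) ((D + star D) (e n)))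
    (hdiag : ∀ n : ℤ,
      (inner ℂ (e n) (E (e n)) : ℂ) = (1 / 2 : ℂ) * inner ℂ (e n) ((D + star D) (e n)))
    (hupper : ∀ m n : ℤ, m < n → (inner ℂ (e m) (E (e n)) : ℂ) = 0) :
    ∀ C : H →L[ℂ] H, SkewHerm C →
      (traceOp e (C * D)).im = (traceOp e (C * E)).im := by
  intro C hC
  have hsymm : E + star E = D + star D :=
    add_star_eq_of_triangular_truncation e (IsSelfAdjoint.add_star_self D) hstrict hdiag hupper
  rw [hD.im_traceOp_mul hC, hE.im_traceOp_mul hC, hsymm]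

end PL
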